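/- Let n ≥ 1 and let x, y ∈ Bⁿ. Then j_{Bⁿ}(x,y) ≤ c_{Bⁿ}(x,y). -/

import Mathlib

open Metric Set Real

/-- The triangular ratio metric of `G`. -/
noncomputable def sMet {E : Type*} [MetricSpace E] (G : Set E) (x y : E) : ℝ :=
  sSup ((fun z => dist x y / (dist x z + dist z y)) '' frontier G)

/-- The Cassinian metric of `G`. -/
noncomputable def cMet {E : Type*} [MetricSpace E] (G : Set E) (x y : E) : ℝ :=
  sSup ((fun z => dist x y / (dist x z * dist z y)) '' frontier G)

/-- The distance ratio metric of `G`. -/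
noncomputable def jMet {E : Type*} [MetricSpace E] (G : Set E) (x y : E) : ℝ :=
  Real.log (1 + dist x y / min (infDist x (frontier G)) (infDist y (frontier G)))

/-!
Assume `‖y‖ ≤ ‖x‖`, so that `j(x,y) ≤ log (1 + r/m)` with `r = |x - y|` and `m = 1 - ‖x‖`.
The boundary point `z = x/‖x‖` nearest to `x` has `|x - z| = m` and `|z - y| ≤ m + r`, hence
`c(x,y) ≥ r/(m(m + r))`. Finally `log t ≤ sinh (log t) = (t - t⁻¹)/2` at `t = 1 + r/m` gives
`log (1 + r/m) ≤ r(2m + r)/(2m(m + r))`, which is at most `r/(m(m + r))` because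
`r + 2m ≤ ‖x‖ + ‖y‖ + 2(1 - ‖x‖) ≤ 2`.
-/

theorem Real.log_le_half_sub_inv {t : ℝ} (ht : 1 ≤ t) : log t ≤ (t - t⁻¹) / 2 := by
  rw [← sinh_log (by linarith)]
  exact self_le_sinh_iff.2 (log_nonneg ht)

theorem Real.log_one_add_div_le {m r : ℝ} (hm : 0 < m) (hr : 0 ≤ r) (hrm : r + 2 * m ≤ 2) :
    log (1 + r / m) ≤ r / (m * (m + r)) := by
  have hmr : 0 < m + r := by linarith
  calc log (1 + r / m) ≤ (1 + r / m - (1 + r / m)⁻¹) / 2 :=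
        log_le_half_sub_inv (le_add_of_nonneg_right (by positivity))
    _ = (2 * m + r) / 2 * (r / (m * (m + r))) := by field_simp; ring
    _ ≤ r / (m * (m + r)) :=
        mul_le_of_le_one_left (by positivity) ((div_le_one two_pos).2 (by linarith))

section MetricSpace

variable {E : Type*} [MetricSpace E]

theorem jMet_comm (G : Set E) (x y : E) : jMet G x y = jMet G y x := by
  rw [jMet, jMet, dist_comm, min_comm]

theorem cMet_comm (G : Set E) (x y : E) : cMet G x y = cMet G y x := by
  simp only [cMet, dist_comm x y, dist_comm x, dist_comm _ y, mul_comm]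

@[simp]
theorem jMet_self (G : Set E) (x : E) : jMet G x x = 0 := by
  simp [jMet]

theorem cMet_nonneg (G : Set E) (x y : E) : 0 ≤ cMet G x y :=
  Real.sSup_nonneg <| by
    rintro _ ⟨z, -, rfl⟩
    positivity

end MetricSpace

theorem one_sub_norm_le_dist_of_mem_sphere {E : Type*} [SeminormedAddCommGroup E] {x z : E}
    (hz : z ∈ sphere (0 : E) 1) : 1 - ‖x‖ ≤ dist x z := by
  rw [← mem_sphere_zero_iff_norm.1 hz, dist_comm, dist_eq_norm]
  exact norm_sub_norm_le z x

section UnitBall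

variable {E : Type*} [NormedAddCommGroup E] [NormedSpace ℝ E]

theorem one_sub_norm_le_infDist_sphere [Nontrivial E] (x : E) :
    1 - ‖x‖ ≤ infDist x (sphere (0 : E) 1) :=
  (le_infDist (NormedSpace.sphere_nonempty.2 zero_le_one)).2 fun _ hz =>
    one_sub_norm_le_dist_of_mem_sphere hz

theorem inv_norm_smul_mem_sphere {x : E} (hx : x ≠ 0) : ‖x‖⁻¹ • x ∈ sphere (0 : E) 1 := by
  simpa using norm_smul_inv_norm (𝕜 := ℝ) hx

theorem dist_inv_norm_smul_self {x : E} (hx0 : x ≠ 0) (hx : ‖x‖ ≤ 1) :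
    dist x (‖x‖⁻¹ • x) = 1 - ‖x‖ := by
  have hpos : 0 < ‖x‖ := norm_pos_iff.2 hx0
  have hsub : ‖x‖⁻¹ • x - x = (‖x‖⁻¹ - 1) • x := by rw [sub_smul, one_smul]
  rw [dist_eq_norm', hsub, norm_smul, Real.norm_of_nonneg (sub_nonneg.2 ((one_le_inv₀ hpos).2 hx)),
    sub_mul, inv_mul_cancel₀ hpos.ne', one_mul]

theorem jMet_ball_le_of_norm_le [Nontrivial E] {x y : E} (hx : ‖x‖ < 1) (hyx : ‖y‖ ≤ ‖x‖) :
    jMet (ball (0 : E) 1) x y ≤ log (1 + dist x y / (1 - ‖x‖)) := by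
  have hmin : 1 - ‖x‖ ≤ min (infDist x (sphere 0 1)) (infDist y (sphere 0 1)) :=
    le_min (one_sub_norm_le_infDist_sphere x)
      ((sub_le_sub_left hyx 1).trans (one_sub_norm_le_infDist_sphere y))
  have hm : 0 < 1 - ‖x‖ := sub_pos.2 hx
  rw [jMet, frontier_ball 0 one_ne_zero]
  refine log_le_log (add_pos_of_pos_of_nonneg one_pos ?_) ?_
  · exact div_nonneg dist_nonneg (hm.le.trans hmin)
  · gcongr

theorem le_cMet_ball {x y z : E} (hx : ‖x‖ < 1) (hy : ‖y‖ < 1) (hz : z ∈ sphere (0 : E) 1) :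
    dist x y / (dist x z * dist z y) ≤ cMet (ball (0 : E) 1) x y := by
  have hbdd : BddAbove ((fun z => dist x y / (dist x z * dist z y)) '' sphere (0 : E) 1) := by
    refine ⟨dist x y / ((1 - ‖x‖) * (1 - ‖y‖)), ?_⟩
    rintro _ ⟨w, hw, rfl⟩
    have hxw : 1 - ‖x‖ ≤ dist x w := one_sub_norm_le_dist_of_mem_sphere hw
    have hyw : 1 - ‖y‖ ≤ dist w y := dist_comm y w ▸ one_sub_norm_le_dist_of_mem_sphere hw
    have hx' : 0 < 1 - ‖x‖ := sub_pos.2 hx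
    have hy' : 0 < 1 - ‖y‖ := sub_pos.2 hy
    dsimp only
    gcongr
  rw [cMet, frontier_ball 0 one_ne_zero]
  exact le_csSup hbdd ⟨z, hz, rfl⟩

theorem jMet_le_cMet_ball_of_norm_le {x y : E} (hx : ‖x‖ < 1) (hy : ‖y‖ < 1)
    (hyx : ‖y‖ ≤ ‖x‖) : jMet (ball (0 : E) 1) x y ≤ cMet (ball (0 : E) 1) x y := by
  rcases eq_or_ne x y with rfl | hxy
  · simpa using cMet_nonneg _ x x
  have hx0 : x ≠ 0 := by
    rintro rfl
    exact hxy (norm_le_zero_iff.1 (by simpa using hyx)).symm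
  have : Nontrivial E := nontrivial_of_ne x 0 hx0
  set z := ‖x‖⁻¹ • x
  have hz : z ∈ sphere (0 : E) 1 := inv_norm_smul_mem_sphere hx0
  set m := 1 - ‖x‖
  set r := dist x y
  have hm : 0 < m := sub_pos.2 hx
  have hxz : dist x z = m := dist_inv_norm_smul_self hx0 hx.le
  have hzy : dist z y ≤ m + r := hxz ▸ dist_comm x z ▸ dist_triangle z x y
  have hzy_pos : 0 < dist z y :=
    (sub_pos.2 hy).trans_le (dist_comm y z ▸ one_sub_norm_le_dist_of_mem_sphere hz)
  have hrm : r + 2 * m ≤ 2 := by linarith [dist_le_norm_add_norm x y]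
  calc jMet (ball 0 1) x y ≤ log (1 + r / m) := jMet_ball_le_of_norm_le hx hyx
    _ ≤ r / (m * (m + r)) := log_one_add_div_le hm dist_nonneg hrm
    _ ≤ r / (dist x z * dist z y) := by rw [hxz]; gcongr
    _ ≤ cMet (ball 0 1) x y := le_cMet_ball hx hy hz

theorem jMet_le_cMet_ball {x y : E} (hx : x ∈ ball (0 : E) 1) (hy : y ∈ ball (0 : E) 1) :
    jMet (ball (0 : E) 1) x y ≤ cMet (ball (0 : E) 1) x y := by
  rw [mem_ball_zero_iff] at hx hy
  rcases le_total ‖y‖ ‖x‖ with hyx | hxy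
  · exact jMet_le_cMet_ball_of_norm_le hx hy hyx
  · rw [jMet_comm, cMet_comm]
    exact jMet_le_cMet_ball_of_norm_le hy hx hxy

end UnitBall

theorem jMet_le_cMet_general (n : ℕ) (x y : EuclideanSpace ℝ (Fin n))
    (hx : x ∈ Metric.ball (0 : EuclideanSpace ℝ (Fin n)) 1)
    (hy : y ∈ Metric.ball (0 : EuclideanSpace ℝ (Fin n)) 1) :
    jMet (Metric.ball (0 : EuclideanSpace ℝ (Fin n)) 1) x y ≤
      cMet (Metric.ball (0 : EuclideanSpace ℝ (Fin n)) 1) x y :=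
  jMet_le_cMet_ball hx hy

/-- for `x, y ∈ Bⁿ`, `j_{Bⁿ}(x,y) ≤ c_{Bⁿ}(x,y)`. -/
theorem jMet_le_cMet (n : ℕ) (hn : 1 ≤ n) (x y : EuclideanSpace ℝ (Fin n))
    (hx : x ∈ Metric.ball (0 : EuclideanSpace ℝ (Fin n)) 1)
    (hy : y ∈ Metric.ball (0 : EuclideanSpace ℝ (Fin n)) 1) :
    jMet (Metric.ball (0 : EuclideanSpace ℝ (Fin n)) 1) x y ≤
      cMet (Metric.ball (0 : EuclideanSpace ℝ (Fin n)) 1) x y :=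
  jMet_le_cMet_general n x y hx hy
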